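/- arXiv:math/9906169 — 9 statements merged into one kernel-verified Lean document; each statement's English description precedes it below -/
import Mathlib

section
/- Let X be a locally compact Hausdorff space and f a continuous function on X. Then the set (1+|f|²)^{1/2}·C_c(X) = {(1+|f|²)^{1/2}·g : g ∈ C_c(X)} is dense in C₀(X) with respect to the uniform norm. -/
open ZeroAtInfty

namespace ZeroAtInftyContinuousMap

variable {X E : Type*} [TopologicalSpace X] [NormedAddCommGroup E] [NormedSpace ℝ E]

/-- Cutting `h` off by an Urysohn function that is `1` on a compact set outside of which
`‖h‖ < ε / 2` moves it by at most `ε / 2`. -/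
theorem dense_setOf_hasCompactSupport [RegularSpace X] [LocallyCompactSpace X] :
    Dense {h : C₀(X, E) | HasCompactSupport h} := by
  refine Metric.dense_iff.mpr fun h ε hε => ?_
  obtain ⟨K, hK, h_small⟩ : ∃ K, IsCompact K ∧ Kᶜ ⊆ h ⁻¹' Metric.ball 0 (ε / 2) :=
    Filter.mem_cocompact.mp <| zero_at_infty h <| Metric.ball_mem_nhds 0 (by positivity)
  obtain ⟨φ, hφK, -, hφ_supp, hφ_mem⟩ :=
    exists_continuous_one_zero_of_isCompact hK isClosed_empty (Set.disjoint_empty K)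
  have hφh_supp : HasCompactSupport (φ • (h : C(X, E))) := hφ_supp.smul_right
  refine ⟨⟨φ • (h : C(X, E)), hφh_supp.is_zero_at_infty⟩, ?_, hφh_supp⟩
  have h_dist : ∀ x, dist (h x) (φ x • h x) ≤ ε / 2 := fun x => by
    rw [dist_eq_norm, show h x - φ x • h x = (1 - φ x) • h x by rw [sub_smul, one_smul],
      norm_smul]
    by_cases hx : x ∈ K
    · simp only [hφK hx, Pi.one_apply, sub_self, norm_zero, zero_mul]
      positivity
    · have hφx : ‖1 - φ x‖ ≤ 1 := by
        rw [Real.norm_eq_abs, abs_le]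
        constructor <;> linarith [(hφ_mem x).1, (hφ_mem x).2]
      calc ‖1 - φ x‖ * ‖h x‖ ≤ 1 * ‖h x‖ := by gcongr
        _ ≤ ε / 2 := by simpa using (mem_ball_zero_iff.mp (h_small hx)).le
  rw [Metric.mem_ball, dist_comm, ← dist_toBCF_eq_dist]
  exact ((BoundedContinuousFunction.dist_le (by positivity)).mpr h_dist).trans_lt (by linarith)

end ZeroAtInftyContinuousMap

theorem HasCompactSupport.exists_eq_mul_of_ne_zero {X K : Type*} [TopologicalSpace X]
    [DivisionRing K] [TopologicalSpace K] [ContinuousInv₀ K] [ContinuousMul K]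
    {h : X → K} (hh : HasCompactSupport h) (h_cont : Continuous h) {w : C(X, K)}
    (hw : ∀ x, w x ≠ 0) :
    ∃ g : C(X, K), HasCompactSupport g ∧ ∀ x, h x = w x * g x :=
  ⟨⟨fun x => (w x)⁻¹ * h x, (w.continuous.inv₀ hw).mul h_cont⟩,
    hh.mul_left (f := fun x => (w x)⁻¹), fun x => (mul_inv_cancel_left₀ (hw x) (h x)).symm⟩

/-- For a locally compact Hausdorff space `X` and continuous `f` on `X`, the set
`(1+|f|²)^{1/2}·C_c(X)` is dense in `C₀(X)` in the uniform norm. -/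
theorem stmt_1 {X : Type*} [TopologicalSpace X] [LocallyCompactSpace X] [T2Space X]
    (f : C(X, ℂ)) :
    Dense {h : C₀(X, ℂ) | ∃ g : C(X, ℂ), HasCompactSupport g ∧
      ∀ x, h x = (Real.sqrt (1 + ‖f x‖ ^ 2) : ℂ) * g x} := by
  let w : C(X, ℂ) := ⟨fun x => (Real.sqrt (1 + ‖f x‖ ^ 2) : ℂ), by fun_prop⟩
  have hw : ∀ x, w x ≠ 0 := fun x =>
    Complex.ofReal_ne_zero.mpr (Real.sqrt_pos.mpr (by positivity)).ne'
  exact ZeroAtInftyContinuousMap.dense_setOf_hasCompactSupport.mono fun h hh =>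
    hh.exists_eq_mul_of_ne_zero h.continuous hw
end

section
/- Let X be a locally compact Hausdorff space and let D be a dense ideal of the C*-algebra C₀(X). Then D contains C_c(X), the ideal of compactly supported continuous functions. -/
open ZeroAtInfty

/-- Every dense (two-sided, here the algebra is commutative) ideal `D` of `C₀(X)`,
for `X` locally compact Hausdorff, contains every compactly supported continuous function. -/
theorem stmt_2 {X : Type*} [TopologicalSpace X] [LocallyCompactSpace X] [T2Space X]
    (D : Submodule ℂ C₀(X, ℂ))
    (hIdeal : ∀ g ∈ D, ∀ h : C₀(X, ℂ), g * h ∈ D)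
    (hDense : Dense (D : Set C₀(X, ℂ))) :
    ∀ g : C₀(X, ℂ), HasCompactSupport (g : X → ℂ) → g ∈ D := by
  intro g hg
  set K := tsupport (g : X → ℂ) with hK
  -- find a relatively compact open set `s ⊇ K`
  obtain ⟨K', hK'c, hKK'⟩ := exists_compact_superset hg
  set s := interior K'
  have hsopen : IsOpen s := isOpen_interior
  have hscl : IsCompact (closure s) :=
    hK'c.of_isClosed_subset isClosed_closure
      (closure_minimal interior_subset hK'c.isClosed)
  -- Urysohn: `u = 1` on `K`, supported in `s`
  obtain ⟨u, husupp, huK, hu01⟩ :=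
    exists_tsupport_one_of_isOpen_isClosed hsopen hscl (isClosed_tsupport _) hKK'
  have huc : HasCompactSupport u :=
    hscl.of_isClosed_subset (isClosed_tsupport _) (husupp.trans subset_closure)
  -- complex version of `u` as an element of `C₀`
  have hucC : HasCompactSupport (fun x => (u x : ℂ)) :=
    huc.comp_left (g := (Complex.ofReal : ℝ → ℂ)) Complex.ofReal_zero
  let uC : C₀(X, ℂ) :=
    ⟨⟨fun x => (u x : ℂ), Complex.continuous_ofReal.comp u.continuous⟩,
      hucC.is_zero_at_infty⟩
  -- approximate `uC` by `f ∈ D` within `1/2`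
  have huCmem : uC ∈ closure (D : Set C₀(X, ℂ)) := hDense uC
  obtain ⟨f, hfD, hfu⟩ := Metric.mem_closure_iff.mp huCmem (1/2) (by norm_num)
  -- `q x = |f x|²`; `p := f * star f ∈ D` and `p x = q x`
  set q : X → ℝ := fun x => Complex.normSq (f x) with hq
  have hqcont : Continuous q := Complex.continuous_normSq.comp (map_continuous f)
  have hqK : ∀ x ∈ K, (1/4 : ℝ) ≤ q x := by
    intro x hx
    have h1 : ‖uC x - f x‖ < 1/2 := by
      have := BoundedContinuousFunction.norm_coe_le_norm (uC - f).toBCF x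
      rw [ZeroAtInftyContinuousMap.norm_toBCF_eq_norm] at this
      calc ‖uC x - f x‖ = ‖(uC - f) x‖ := by simp
        _ ≤ ‖uC - f‖ := this
        _ < 1/2 := by rwa [← dist_eq_norm]
    have huCx : uC x = 1 := by
      have : u x = 1 := huK hx
      simp [uC, this]
    rw [huCx] at h1
    have h2 : (1/2 : ℝ) ≤ ‖f x‖ := by
      have := norm_sub_norm_le (1 : ℂ) (f x)
      have h3 : ‖(1 : ℂ)‖ = 1 := by simp
      nlinarith [norm_nonneg (f x), this]
    have : ‖f x‖ ^ 2 = Complex.normSq (f x) := by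
      rw [← Complex.sq_norm]
    nlinarith [this]
  -- define `h = g / q`
  set h : X → ℂ := fun x => g x / (q x : ℂ) with hh
  have hcont : Continuous h := by
    rw [continuous_iff_continuousAt]
    intro x
    by_cases hx : x ∈ K
    · -- near `x`, `q ≠ 0`
      have hqx : (q x : ℂ) ≠ 0 := by
        have := hqK x hx
        simp only [ne_eq, Complex.ofReal_eq_zero]
        linarith
      exact ((map_continuous g).continuousAt).div
        ((Complex.continuous_ofReal.comp hqcont).continuousAt) hqx
    · -- near `x`, `g = 0`, so `h = 0`
      have hopen : IsOpen Kᶜ := (isClosed_tsupport _).isOpen_compl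
      have hev : ∀ᶠ y in nhds x, h y = 0 := by
        filter_upwards [hopen.mem_nhds hx] with y hy
        have : g y = 0 := image_eq_zero_of_notMem_tsupport hy
        simp [h, this]
      exact ContinuousAt.congr continuousAt_const (hev.mono fun y hy => hy.symm)
  have hhc : HasCompactSupport h := by
    apply HasCompactSupport.intro hg
    intro x hx
    have : g x = 0 := image_eq_zero_of_notMem_tsupport hx
    simp [h, this]
  let hC : C₀(X, ℂ) := ⟨⟨h, hcont⟩, hhc.is_zero_at_infty⟩
  have hpD : f * star f ∈ D := hIdeal f hfD (star f)
  have hgeq : (f * star f) * hC = g := by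
    ext x
    have hval : (f * star f) x = (q x : ℂ) := by
      simp [q, Complex.mul_conj]
    show ((f * star f) * hC) x = g x
    rw [ZeroAtInftyContinuousMap.mul_apply, hval]
    show (q x : ℂ) * (g x / (q x : ℂ)) = g x
    by_cases hqx : (q x : ℂ) = 0
    · have hxK : x ∉ K := by
        intro hxK
        have := hqK x hxK
        rw [Complex.ofReal_eq_zero] at hqx
        linarith
      have : g x = 0 := image_eq_zero_of_notMem_tsupport hxK
      simp [this, hqx]
    · rw [mul_div_cancel₀ _ hqx]
  rw [← hgeq]
  exact hIdeal _ hpD hC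
end

section
/- Let X be a locally compact Hausdorff space and T a densely defined linear operator on C₀(X) whose domain is a dense ideal containing C_c(X), and which is C₀(X)-linear (T(gh) = (Tg)h for g in the domain and h ∈ C₀(X)). Then there exists a continuous function f on X such that Tg = f·g for all g ∈ C_c(X). -/
/-!
Since `D` is an ideal in the commutative algebra `C₀(X)`, module-linearity gives
`(T g) g' = T (g g') = (T g') g` for all `g, g' ∈ D`. Taking for `g'` a compactly supported
bump `b_x` equal to `1` near `x`, this reads `(T g)(x) = (T b_x)(x) g(x)`, so
`f(x) := (T b_x)(x)` works; `f` agrees near `x` with the continuous function `T b_x`,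
hence is continuous.
-/

open ZeroAtInfty Filter Topology

theorem map_mul_comm_of_map_mul {A S : Type*} [CommMagma A] [SetLike S A] {D : S}
    (hD : ∀ g ∈ D, ∀ h : A, g * h ∈ D) (T : D → A)
    (hT : ∀ (g : D) (h : A), T ⟨g * h, hD g g.2 h⟩ = T g * h) (g g' : D) :
    T g * g' = T g' * g := by
  rw [← hT, ← hT]
  congr 2
  exact mul_comm _ _

theorem exists_continuous_eq_mul_of_mul_comm {ι X M : Type*} [TopologicalSpace X]
    [TopologicalSpace M] [MulOneClass M] {u v : ι → X → M} (hu : ∀ i, Continuous (u i))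
    (hcomm : ∀ i j x, u i x * v j x = u j x * v i x)
    (hone : ∀ x, ∃ i, ∀ᶠ y in 𝓝 x, v i y = 1) :
    ∃ f : C(X, M), ∀ i x, u i x = f x * v i x := by
  choose b hb using hone
  have hb_self (x : X) : v (b x) x = 1 := (hb x).self_of_nhds
  have hf (x : X) : (fun y => u (b y) y) =ᶠ[𝓝 x] u (b x) := by
    filter_upwards [hb x] with y hy
    simpa [hy, hb_self] using hcomm (b y) (b x) y
  refine ⟨⟨fun x => u (b x) x, continuous_iff_continuousAt.2 fun x =>
    ((hu (b x)).continuousAt.congr_of_eventuallyEq (hf x))⟩, fun i x => ?_⟩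
  simpa [hb_self] using hcomm i (b x) x

theorem ZeroAtInftyContinuousMap.exists_hasCompactSupport_eventually_eq_one {X : Type*}
    [TopologicalSpace X] [RegularSpace X] [LocallyCompactSpace X] (x : X) :
    ∃ g : C₀(X, ℂ), HasCompactSupport g ∧ ∀ᶠ y in 𝓝 x, g y = 1 := by
  obtain ⟨k, hk, hxk⟩ := exists_compact_mem_nhds x
  obtain ⟨φ, hφ1, -, hφc, -⟩ :=
    exists_continuous_one_zero_of_isCompact hk isClosed_empty (Set.disjoint_empty k)
  have hc : HasCompactSupport fun y => (φ y : ℂ) := hφc.comp_left Complex.ofReal_zero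
  refine ⟨⟨⟨fun y => (φ y : ℂ), by fun_prop⟩, hc.is_zero_at_infty⟩, hc, ?_⟩
  filter_upwards [hxk] with y hy
  simp [hφ1 hy]

theorem stmt_3_general {X : Type*} [TopologicalSpace X] [LocallyCompactSpace X] [T2Space X]
    (D : Submodule ℂ C₀(X, ℂ))
    (hIdeal : ∀ g ∈ D, ∀ h : C₀(X, ℂ), g * h ∈ D)
    (hCc : ∀ g : C₀(X, ℂ), HasCompactSupport (g : X → ℂ) → g ∈ D)
    (T : D →ₗ[ℂ] C₀(X, ℂ))
    (hTmod : ∀ (g : D) (h : C₀(X, ℂ)),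
      T ⟨(g : C₀(X, ℂ)) * h, hIdeal g g.2 h⟩ = T g * h) :
    ∃ f : C(X, ℂ), ∀ (g : C₀(X, ℂ)) (hg : g ∈ D),
      HasCompactSupport (g : X → ℂ) → ∀ x, T ⟨g, hg⟩ x = f x * g x := by
  have hcomm (g g' : D) (x : X) : T g x * (g' : C₀(X, ℂ)) x = T g' x * (g : C₀(X, ℂ)) x :=
    congr($(map_mul_comm_of_map_mul hIdeal T hTmod g g') x)
  have hone (x : X) : ∃ g : D, ∀ᶠ y in 𝓝 x, (g : C₀(X, ℂ)) y = 1 := by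
    obtain ⟨g, hgc, hg1⟩ := ZeroAtInftyContinuousMap.exists_hasCompactSupport_eventually_eq_one x
    exact ⟨⟨g, hCc g hgc⟩, hg1⟩
  obtain ⟨f, hf⟩ := exists_continuous_eq_mul_of_mul_comm (fun g => (T g).continuous) hcomm hone
  exact ⟨f, fun g hg _ => hf ⟨g, hg⟩⟩

/-- Let `X` be locally compact Hausdorff and `T` a densely defined linear operator
on `C₀(X)` whose domain `D` is a dense ideal containing `C_c(X)`, and which is
`C₀(X)`-linear: `T(g·h) = (T g)·h`. Then there is a continuous function `f` on `X` with
`T g = f·g` for all compactly supported `g` in the domain. -/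
theorem stmt_3 {X : Type*} [TopologicalSpace X] [LocallyCompactSpace X] [T2Space X]
    (D : Submodule ℂ C₀(X, ℂ))
    (hDense : Dense (D : Set C₀(X, ℂ)))
    (hIdeal : ∀ g ∈ D, ∀ h : C₀(X, ℂ), g * h ∈ D)
    (hCc : ∀ g : C₀(X, ℂ), HasCompactSupport (g : X → ℂ) → g ∈ D)
    (T : D →ₗ[ℂ] C₀(X, ℂ))
    (hTmod : ∀ (g : D) (h : C₀(X, ℂ)),
      T ⟨(g : C₀(X, ℂ)) * h, hIdeal g g.2 h⟩ = T g * h) :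
    ∃ f : C(X, ℂ), ∀ (g : C₀(X, ℂ)) (hg : g ∈ D),
      HasCompactSupport (g : X → ℂ) → ∀ x, T ⟨g, hg⟩ x = f x * g x :=
  stmt_3_general D hIdeal hCc T hTmod
end

section
/- Let A be a C*-algebra, T a densely defined A-linear operator on A (viewed as a Hilbert module over itself) with densely defined adjoint, and π an irreducible representation of A. Then the fiber operator T_π, defined on D(T)_π = π(D(T)) by T_π π(a) = π(Ta), is well defined: if π(a) = π(b) for a,b ∈ D(T), then π(Ta) = π(Tb). -/
open scoped CStarAlgebra

/-!
Put `d = a - b`, so `π d = 0`. Taking adjoints in `(T d)* c = d* (S c)` gives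
`c* (T d) = (S c)* d`, hence `π (c* · T d) = 0` for every `c` in the dense domain of `S`,
and by continuity `π (y · T d) = 0` for every `y ∈ A`. So every vector in the range of
`π (T d)` is killed by all of `π (A)`; irreducibility forces such a vector to vanish,
i.e. `π (T d) = 0`.
-/

theorem forall_apply_mul_eq_zero_of_dense {A B : Type*} [TopologicalSpace A] [Mul A]
    [InvolutiveStar A] [ContinuousStar A] [ContinuousMul A]
    [TopologicalSpace B] [T2Space B] [Zero B] {f : A → B} (hf : Continuous f)
    {s : Set A} (hs : Dense s) (z : A) (h : ∀ c ∈ s, f (star c * z) = 0) (y : A) :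
    f (y * z) = 0 := by
  have hext : (fun x => f (star x * z)) = fun _ => 0 :=
    Continuous.ext_on hs (by fun_prop) continuous_const h
  simpa using congrFun hext (star y)

theorem ContinuousLinearMap.eq_zero_of_forall_mul_eq_zero {A R H : Type*} [Semiring R]
    [TopologicalSpace H] [T1Space H] [AddCommMonoid H] [Module R H]
    (π : A → H →L[R] H) (hirr : ∀ ξ : H, ξ ≠ 0 → Dense (Set.range fun a : A => π a ξ))
    (x : H →L[R] H) (hx : ∀ a, π a * x = 0) : x = 0 := by
  ext ξ
  by_contra hne
  have hrange : Set.range (fun a => π a (x ξ)) ⊆ {0} := by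
    rintro _ ⟨a, rfl⟩
    simpa using congrArg (· ξ) (hx a)
  have huniv : (Set.univ : Set H) ⊆ {0} := by
    rw [← (hirr _ hne).closure_eq]
    exact closure_minimal hrange isClosed_singleton
  exact hne (huniv (Set.mem_univ _))

theorem stmt_8_general {A : Type*} [NonUnitalCStarAlgebra A]
    {Hπ : Type*} [NormedAddCommGroup Hπ] [InnerProductSpace ℂ Hπ] [CompleteSpace Hπ]
    (D : Submodule ℂ A)
    (Ds : Submodule ℂ A) (hDs : Dense (Ds : Set A))
    (T : D →ₗ[ℂ] A) (S : Ds →ₗ[ℂ] A)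
    (hadj : ∀ (a : D) (c : Ds), star (T a) * (c : A) = star (a : A) * S c)
    (π : A →⋆ₙₐ[ℂ] (Hπ →L[ℂ] Hπ))
    (hirr : ∀ ξ : Hπ, ξ ≠ 0 → Dense (Set.range fun a : A => π a ξ)) :
    ∀ a b : D, π a = π b → π (T a) = π (T b) := by
  intro a b hab
  have hπd : π ((a - b : D) : A) = 0 := by
    rw [Submodule.coe_sub, map_sub, hab, sub_self]
  have hann : ∀ c ∈ (Ds : Set A), π (star c * T (a - b)) = 0 := fun c hc => by
    have hadj' := congrArg star (hadj (a - b) ⟨c, hc⟩)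
    simp only [star_mul, star_star] at hadj'
    rw [hadj', map_mul, hπd, mul_zero]
  have hTd : π (T (a - b)) = 0 :=
    ContinuousLinearMap.eq_zero_of_forall_mul_eq_zero π hirr _ fun y => by
      rw [← map_mul]
      exact forall_apply_mul_eq_zero_of_dense (map_continuous π) hDs _ hann y
  rwa [map_sub, map_sub, sub_eq_zero] at hTd

/-- Let `A` be a C*-algebra, `T` a densely defined `A`-linear operator on `A`
(Hilbert module over itself, `⟪a,b⟫ = a* b`) with densely defined adjoint `S`, and `π` an
irreducible representation of `A` on a Hilbert space `Hπ`.  Then the fiber operator `T_π`,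
`T_π (π a) := π (T a)`, is well defined: `π a = π b` implies `π (T a) = π (T b)`. -/
theorem stmt_8 {A : Type*} [NonUnitalCStarAlgebra A]
    {Hπ : Type*} [NormedAddCommGroup Hπ] [InnerProductSpace ℂ Hπ] [CompleteSpace Hπ]
    (D : Submodule ℂ A) (hD : Dense (D : Set A))
    (hIdeal : ∀ a ∈ D, ∀ x : A, a * x ∈ D)
    (Ds : Submodule ℂ A) (hDs : Dense (Ds : Set A))
    (T : D →ₗ[ℂ] A) (S : Ds →ₗ[ℂ] A)
    (hTmod : ∀ (a : D) (x : A), T ⟨(a : A) * x, hIdeal a a.2 x⟩ = T a * x)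
    (hadj : ∀ (a : D) (c : Ds), star (T a) * (c : A) = star (a : A) * S c)
    (π : A →⋆ₙₐ[ℂ] (Hπ →L[ℂ] Hπ))
    (hirr : ∀ ξ : Hπ, ξ ≠ 0 → Dense (Set.range fun a : A => π a ξ)) :
    ∀ a b : D, π a = π b → π (T a) = π (T b) :=
  stmt_8_general D Ds hDs T S hadj π hirr
end

section
/- Let A be a C*-algebra and T a regular operator on A (viewed as a Hilbert module over itself) such that I + T*T has full range. Then for any representation π of A, the fiber operator T_π satisfies: the range of I + T_π* T_π contains π(A); in particular if ran(I+T*T) = A then ran(I + T_π*T_π) = π(A). -/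
/-- Applied to the adjoint relation of `(T, T*)`, this gives `(T*)_π ⊆ (T_π)*`. -/
theorem map_star_mul_eq_star_mul {R S F : Type*} [Mul R] [Star R] [Mul S] [Star S] [FunLike F R S]
    [MulHomClass F R S] [StarHomClass F R S] (π : F) {u v w z : R}
    (h : star u * v = star w * z) : star (π u) * π v = star (π w) * π z := by
  rw [← map_star, ← map_mul, h, map_mul, map_star]

theorem stmt_9_general {A : Type*} [NonUnitalCStarAlgebra A]
    {Hπ : Type*} [NormedAddCommGroup Hπ] [InnerProductSpace ℂ Hπ] [CompleteSpace Hπ]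
    (D : Submodule ℂ A) (Ds : Submodule ℂ A)
    (T : D →ₗ[ℂ] A) (Ts : Ds →ₗ[ℂ] A)
    (hadj : ∀ (a : D) (c : Ds), star (T a) * (c : A) = star (a : A) * Ts c)
    (hran : ∀ b : A, ∃ (a : D) (h : T a ∈ Ds), (a : A) + Ts ⟨T a, h⟩ = b)
    (π : A →⋆ₙₐ[ℂ] (Hπ →L[ℂ] Hπ)) :
    ∀ b : A, ∃ (a : D) (c : Hπ →L[ℂ] Hπ), c ∈ Set.range π ∧
      (∀ x : D, star (π (T x)) * π (T a) = star (π (x : A)) * c) ∧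
      π (a : A) + c = π b := by
  intro b
  obtain ⟨a, hTa, hab⟩ := hran b
  refine ⟨a, π (Ts ⟨T a, hTa⟩), ⟨_, rfl⟩, fun x ↦ ?_, ?_⟩
  · exact map_star_mul_eq_star_mul π (hadj x ⟨T a, hTa⟩)
  · rw [← map_add, hab]

/-- Let `T` be a regular operator on a C*-algebra `A` (Hilbert module over itself)
with adjoint `T*` and `ran (I + T*T) = A`.  Then for any representation `π` of `A`, the range of
`I + T_π* T_π` contains `π(A)`: every `π b` can be written `π a + c` where `a ∈ D(T)` and `c`
(namely `c = π (T*(T a)) ∈ π(A)`) satisfies the defining adjoint relation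
`(π (T x))* (π (T a)) = (π x)* c` for all `x ∈ D(T)`, i.e. `c = T_π*(T_π (π a))`. -/
theorem stmt_9 {A : Type*} [NonUnitalCStarAlgebra A]
    {Hπ : Type*} [NormedAddCommGroup Hπ] [InnerProductSpace ℂ Hπ] [CompleteSpace Hπ]
    (D : Submodule ℂ A) (hD : Dense (D : Set A))
    (Ds : Submodule ℂ A) (hDs : Dense (Ds : Set A))
    (T : D →ₗ[ℂ] A) (Ts : Ds →ₗ[ℂ] A)
    (hadj : ∀ (a : D) (c : Ds), star (T a) * (c : A) = star (a : A) * Ts c)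
    (hran : ∀ b : A, ∃ (a : D) (h : T a ∈ Ds), (a : A) + Ts ⟨T a, h⟩ = b)
    (π : A →⋆ₙₐ[ℂ] (Hπ →L[ℂ] Hπ)) :
    ∀ b : A, ∃ (a : D) (c : Hπ →L[ℂ] Hπ), c ∈ Set.range π ∧
      (∀ x : D, star (π (T x)) * π (T a) = star (π (x : A)) * c) ∧
      π (a : A) + c = π b :=
  stmt_9_general D Ds T Ts hadj hran π
end

section
/- Let H be a Hilbert space, z ∈ B(H) with ‖z‖ ≤ 1 and (1−z*z)^{1/2} injective with dense range, and let u ∈ B(H) be an isometry satisfying (u*(1−z*z)u)^{1/2} = (1−z*z)^{1/2}u. Then (1−z*z)^{1/2}u = u*(1−z*z)^{1/2}, and the operator (1−(zu)*(zu))^{1/2} has dense range. -/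
set_option synthInstance.maxHeartbeats 1000000
set_option maxHeartbeats 1000000
/-- Let `z` be a contraction on a Hilbert space with `(1−z*z)^{1/2}` injective
with dense range, and `u` an isometry with `(u*(1−z*z)u)^{1/2} = (1−z*z)^{1/2} u`.  Then
`(1−z*z)^{1/2} u = u* (1−z*z)^{1/2}`, and `(1−(zu)*(zu))^{1/2}` has dense range. -/
theorem stmt_11 {H : Type*} [NormedAddCommGroup H] [InnerProductSpace ℂ H] [CompleteSpace H]
    (z u : H →L[ℂ] H) (hz : ‖z‖ ≤ 1)
    (hinj : Function.Injective ⇑(CFC.sqrt (1 - star z * z)))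
    (hdr : DenseRange ⇑(CFC.sqrt (1 - star z * z)))
    (hu : star u * u = 1)
    (hcomm : CFC.sqrt (star u * (1 - star z * z) * u) = CFC.sqrt (1 - star z * z) * u) :
    CFC.sqrt (1 - star z * z) * u = star u * CFC.sqrt (1 - star z * z) ∧
      DenseRange ⇑(CFC.sqrt (1 - star (z * u) * (z * u))) := by
  set D := CFC.sqrt (1 - star z * z) with hDdef
  have hDsa : IsSelfAdjoint D := IsSelfAdjoint.of_nonneg (CFC.sqrt_nonneg _)
  have hsa : IsSelfAdjoint (CFC.sqrt (star u * (1 - star z * z) * u)) :=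
    IsSelfAdjoint.of_nonneg (CFC.sqrt_nonneg _)
  have h1 : D * u = star u * D := by
    rw [hcomm] at hsa
    conv_lhs => rw [← hsa]
    rw [star_mul, hDsa.star_eq]
  refine ⟨h1, ?_⟩
  have harg : 1 - star (z * u) * (z * u) = star u * (1 - star z * z) * u := by
    rw [mul_sub, sub_mul, mul_one, hu, star_mul]
    simp [mul_assoc]
  rw [harg, hcomm, h1]
  have husurj : Function.Surjective ⇑(star u) := by
    intro x
    exact ⟨u x, by simpa using congrArg (fun f => f x) hu⟩
  have : DenseRange (⇑(star u) ∘ ⇑D) :=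
    husurj.denseRange.comp hdr (star u).continuous
  simpa [ContinuousLinearMap.coe_mul] using this
end

section
/- Let H be a Hilbert space and z ∈ B(H) a contraction such that (1−z*z)^{1/2} has dense range. Define T with domain (1−z*z)^{1/2}H by T((1−z*z)^{1/2}ξ) = zξ. If u is an isometry on H with (u*(1−z*z)u)^{1/2} = (1−z*z)^{1/2}u, and S is the operator with domain (1−(zu)*(zu))^{1/2}H defined by S((1−(zu)*(zu))^{1/2}ξ) = zuξ, then S ⊆ T, i.e. the graph of S is contained in the graph of T. -/
theorem one_sub_star_mul_self_mul_of_star_mul_self {R : Type*} [Ring R] [StarRing R] {u : R}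
    (hu : star u * u = 1) (z : R) :
    1 - star (z * u) * (z * u) = star u * (1 - star z * z) * u := by
  rw [star_mul, mul_sub, sub_mul, mul_one, hu]
  noncomm_ring

theorem stmt_12_general {H : Type*} [NormedAddCommGroup H] [InnerProductSpace ℂ H] [CompleteSpace H]
    (z u : H →L[ℂ] H)
    (hu : star u * u = 1)
    (hcomm : CFC.sqrt (star u * (1 - star z * z) * u) = CFC.sqrt (1 - star z * z) * u) :
    ∀ ξ : H, ∃ η : H,
      CFC.sqrt (1 - star (z * u) * (z * u)) ξ = CFC.sqrt (1 - star z * z) η ∧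
      (z * u) ξ = z η := by
  intro ξ
  refine ⟨u ξ, ?_, rfl⟩
  rw [one_sub_star_mul_self_mul_of_star_mul_self hu, hcomm]
  rfl

/-- Let `z` be a contraction on a Hilbert space with `(1−z*z)^{1/2}` of dense
range, and let `T` be the operator with domain `(1−z*z)^{1/2}H`, `T((1−z*z)^{1/2}ξ) = zξ`
(the operator with z-transform `z`).  If `u` is an isometry with
`(u*(1−z*z)u)^{1/2} = (1−z*z)^{1/2}u`, and `S` is defined analogously from `zu`, then `S ⊆ T`:
every graph element `((1−(zu)*(zu))^{1/2}ξ, zuξ)` of `S` is a graph element of `T`, i.e. of the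
form `((1−z*z)^{1/2}η, zη)`. -/
theorem stmt_12 {H : Type*} [NormedAddCommGroup H] [InnerProductSpace ℂ H] [CompleteSpace H]
    (z u : H →L[ℂ] H) (hz : ‖z‖ ≤ 1)
    (hdr : DenseRange ⇑(CFC.sqrt (1 - star z * z)))
    (hu : star u * u = 1)
    (hcomm : CFC.sqrt (star u * (1 - star z * z) * u) = CFC.sqrt (1 - star z * z) * u) :
    ∀ ξ : H, ∃ η : H,
      CFC.sqrt (1 - star (z * u) * (z * u)) ξ = CFC.sqrt (1 - star z * z) η ∧
      (z * u) ξ = z η :=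
  stmt_12_general z u hu hcomm
end

section
/- Let H be a Hilbert space, T a closed densely defined operator on H with z-transform z = T(1+T*T)^{−1/2}, and S a closed densely defined operator with z-transform z_S. If S ⊆ T (S is a restriction of T), then the operator w := (1−z*z)^{−1/2}(1−z_S*z_S)^{1/2} is everywhere defined and bounded, satisfies z_S = z·w, and w*(1−z*z)w = 1 − z_S*z_S; in particular w is an isometry. -/
set_option synthInstance.maxHeartbeats 1000000
set_option maxHeartbeats 1000000

/-- Let `z`, `zS` be the z-transforms of closed densely defined operators `T`, `S`
on a Hilbert space (so they are contractions, `(1−z*z)^{1/2}` has dense range and `1−z*z` is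
injective, the operators being given on the domains `(1−z*z)^{1/2}H` by `(1−z*z)^{1/2}ξ ↦ zξ`).
If `S ⊆ T` (each graph element of `S` is one of `T`), then
`w := (1−z*z)^{−1/2}(1−zS*zS)^{1/2}` exists as an everywhere defined bounded operator
(characterized by `(1−zS*zS)^{1/2} = (1−z*z)^{1/2} w`), and it satisfies `zS = z·w` and
`w*(1−z*z)w = 1 − zS*zS`; in particular `w` is an isometry. -/
theorem stmt_13 {H : Type*} [NormedAddCommGroup H] [InnerProductSpace ℂ H] [CompleteSpace H]
    (z zS : H →L[ℂ] H) (hz : ‖z‖ ≤ 1) (hzS : ‖zS‖ ≤ 1)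
    (hdr : DenseRange ⇑(CFC.sqrt (1 - star z * z)))
    (hdrS : DenseRange ⇑(CFC.sqrt (1 - star zS * zS)))
    (hinj : Function.Injective ⇑(1 - star z * z))
    (hinjS : Function.Injective ⇑(1 - star zS * zS))
    (hsub : ∀ ξ : H, ∃ η : H,
      CFC.sqrt (1 - star zS * zS) ξ = CFC.sqrt (1 - star z * z) η ∧ zS ξ = z η) :
    ∃ w : H →L[ℂ] H,
      (∀ ξ : H, CFC.sqrt (1 - star zS * zS) ξ = CFC.sqrt (1 - star z * z) (w ξ)) ∧
      zS = z * w ∧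
      star w * (1 - star z * z) * w = 1 - star zS * zS ∧
      star w * w = 1 := by
  -- positivity of 1 - u*u for contractions u
  have hposgen : ∀ u : H →L[ℂ] H, ‖u‖ ≤ 1 → 0 ≤ 1 - star u * u := by
    intro u hu
    rw [ContinuousLinearMap.nonneg_iff_isPositive]
    constructor
    · rw [← ContinuousLinearMap.isSelfAdjoint_iff_isSymmetric]; unfold IsSelfAdjoint
      simp [star_sub, star_mul, star_star]
    · intro x
      have h1 : (1 - star u * u) x = x - ContinuousLinearMap.adjoint u (u x) := by
        simp [ContinuousLinearMap.sub_apply, ContinuousLinearMap.mul_apply,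
          ContinuousLinearMap.star_eq_adjoint]
      rw [ContinuousLinearMap.reApplyInnerSelf_apply, h1, inner_sub_left,
        ContinuousLinearMap.adjoint_inner_left]
      rw [inner_self_eq_norm_sq_to_K (𝕜 := ℂ) x, inner_self_eq_norm_sq_to_K (𝕜 := ℂ) (u x)]
      have hux : ‖u x‖ ≤ ‖x‖ := by
        calc ‖u x‖ ≤ ‖u‖ * ‖x‖ := u.le_opNorm x
        _ ≤ 1 * ‖x‖ := by gcongr
        _ = ‖x‖ := one_mul _
      have hsq : ‖u x‖ ^ 2 ≤ ‖x‖ ^ 2 := by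
        have := sq_le_sq' (by linarith [norm_nonneg (u x), norm_nonneg x]) hux
        simpa [sq] using this
      simp only [map_sub, ← RCLike.ofReal_pow, RCLike.ofReal_re]
      linarith
  have hpos := hposgen z hz
  have hposS := hposgen zS hzS
  set A := CFC.sqrt (1 - star z * z) with hAdef
  set B := CFC.sqrt (1 - star zS * zS) with hBdef
  have hAA : A * A = 1 - star z * z := CFC.sqrt_mul_sqrt_self _ hpos
  have hBB : B * B = 1 - star zS * zS := CFC.sqrt_mul_sqrt_self _ hposS
  have hApos : (0:H →L[ℂ] H) ≤ A := CFC.sqrt_nonneg _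
  have hBpos : (0:H →L[ℂ] H) ≤ B := CFC.sqrt_nonneg _
  have hAsa : ContinuousLinearMap.adjoint A = A := by
    have : IsSelfAdjoint A :=
      ((ContinuousLinearMap.nonneg_iff_isPositive A).mp hApos).isSelfAdjoint
    rw [← ContinuousLinearMap.star_eq_adjoint]; exact this
  have hBsa : ContinuousLinearMap.adjoint B = B := by
    have : IsSelfAdjoint B :=
      ((ContinuousLinearMap.nonneg_iff_isPositive B).mp hBpos).isSelfAdjoint
    rw [← ContinuousLinearMap.star_eq_adjoint]; exact this
  -- A is injective
  have hAinj : Function.Injective ⇑A := by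
    intro x y h
    apply hinj
    have : A (A x) = A (A y) := by rw [h]
    calc (1 - star z * z) x = (A * A) x := by rw [hAA]
    _ = (A * A) y := this
    _ = (1 - star z * z) y := by rw [hAA]
  -- the key Pythagorean identity
  have hkey : ∀ x : H, (‖A x‖ : ℂ) ^ 2 + (‖z x‖ : ℂ) ^ 2 = (‖x‖ : ℂ) ^ 2 := by
    intro x
    have h1 : ((inner ℂ (A x) (A x) : ℂ)) = (inner ℂ x ((1 - star z * z) x) : ℂ) := by
      calc (inner ℂ (A x) (A x) : ℂ)
          = inner ℂ ((ContinuousLinearMap.adjoint A) x) (A x) := by rw [hAsa]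
      _ = inner ℂ x (A (A x)) := ContinuousLinearMap.adjoint_inner_left A (A x) x
      _ = inner ℂ x ((1 - star z * z) x) := by
            rw [show A (A x) = (A * A) x from rfl, hAA]
    have h2 : (inner ℂ x ((1 - star z * z) x) : ℂ) = (inner ℂ x x : ℂ) - (inner ℂ (z x) (z x) : ℂ) := by
      have : (1 - star z * z) x = x - ContinuousLinearMap.adjoint z (z x) := by
        simp [ContinuousLinearMap.sub_apply, ContinuousLinearMap.mul_apply,
          ContinuousLinearMap.star_eq_adjoint]
      rw [this, inner_sub_right, ContinuousLinearMap.adjoint_inner_right]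
    have h3 : (inner ℂ (A x) (A x) : ℂ) + inner ℂ (z x) (z x) = inner ℂ x x := by
      rw [h1, h2]; ring
    simp only [inner_self_eq_norm_sq_to_K] at h3; exact h3
  have hkeyS : ∀ x : H, (‖B x‖ : ℂ) ^ 2 + (‖zS x‖ : ℂ) ^ 2 = (‖x‖ : ℂ) ^ 2 := by
    intro x
    have h1 : ((inner ℂ (B x) (B x) : ℂ)) = (inner ℂ x ((1 - star zS * zS) x) : ℂ) := by
      calc (inner ℂ (B x) (B x) : ℂ)
          = inner ℂ ((ContinuousLinearMap.adjoint B) x) (B x) := by rw [hBsa]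
      _ = inner ℂ x (B (B x)) := ContinuousLinearMap.adjoint_inner_left B (B x) x
      _ = inner ℂ x ((1 - star zS * zS) x) := by
            rw [show B (B x) = (B * B) x from rfl, hBB]
    have h2 : (inner ℂ x ((1 - star zS * zS) x) : ℂ) = (inner ℂ x x : ℂ) - (inner ℂ (zS x) (zS x) : ℂ) := by
      have : (1 - star zS * zS) x = x - ContinuousLinearMap.adjoint zS (zS x) := by
        simp [ContinuousLinearMap.sub_apply, ContinuousLinearMap.mul_apply,
          ContinuousLinearMap.star_eq_adjoint]
      rw [this, inner_sub_right, ContinuousLinearMap.adjoint_inner_right]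
    have h3 : (inner ℂ (B x) (B x) : ℂ) + inner ℂ (zS x) (zS x) = inner ℂ x x := by
      rw [h1, h2]; ring
    simp only [inner_self_eq_norm_sq_to_K] at h3; exact h3
  -- the function
  set f : H → H := fun ξ => Classical.choose (hsub ξ) with hfdef
  have hf1 : ∀ ξ, B ξ = A (f ξ) := fun ξ => (Classical.choose_spec (hsub ξ)).1
  have hf2 : ∀ ξ, zS ξ = z (f ξ) := fun ξ => (Classical.choose_spec (hsub ξ)).2
  -- f is norm preserving
  have hfnorm : ∀ ξ, ‖f ξ‖ = ‖ξ‖ := by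
    intro ξ
    have h1 := hkey (f ξ)
    rw [← hf1, ← hf2] at h1
    have h2 := hkeyS ξ
    have h3 : (‖f ξ‖ : ℂ) ^ 2 = (‖ξ‖ : ℂ) ^ 2 := by rw [← h1, ← h2]
    have h4 : (‖f ξ‖ : ℝ) ^ 2 = (‖ξ‖ : ℝ) ^ 2 := by exact_mod_cast h3
    calc ‖f ξ‖ = Real.sqrt (‖f ξ‖ ^ 2) := (Real.sqrt_sq (norm_nonneg _)).symm
    _ = Real.sqrt (‖ξ‖ ^ 2) := by rw [h4]
    _ = ‖ξ‖ := Real.sqrt_sq (norm_nonneg _)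
  -- f is linear
  have hadd : ∀ ξ η, f (ξ + η) = f ξ + f η := by
    intro ξ η
    apply hAinj
    rw [← hf1, map_add, map_add, ← hf1, ← hf1]
  have hsmul : ∀ (c : ℂ) ξ, f (c • ξ) = c • f ξ := by
    intro c ξ
    apply hAinj
    rw [← hf1, map_smul, map_smul, ← hf1]
  set wl : H →ₗ[ℂ] H :=
    { toFun := f, map_add' := hadd, map_smul' := hsmul } with hwl
  set w : H →L[ℂ] H := wl.mkContinuous 1 (by
    intro x
    show ‖f x‖ ≤ 1 * ‖x‖
    rw [hfnorm, one_mul]) with hw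
  have hwapp : ∀ ξ, w ξ = f ξ := fun _ => rfl
  have hwnorm : ∀ ξ, ‖w ξ‖ = ‖ξ‖ := fun ξ => by rw [hwapp]; exact hfnorm ξ
  have hisom : star w * w = 1 := by
    have := (ContinuousLinearMap.norm_map_iff_adjoint_comp_self w).mp hwnorm
    rw [ContinuousLinearMap.star_eq_adjoint]
    exact this
  have hzw : zS = z * w := by
    ext ξ
    rw [ContinuousLinearMap.mul_apply, hwapp]
    exact hf2 ξ
  refine ⟨w, fun ξ => by rw [hwapp]; exact hf1 ξ, hzw, ?_, hisom⟩
  have : star w * (1 - star z * z) * w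
      = star w * w - star (z * w) * (z * w) := by
    rw [star_mul]
    noncomm_ring
  rw [this, hisom, ← hzw]
end

section
/- Let A be a C*-algebra and S a closed densely defined operator on the Hilbert A-module A (with domain a right ideal) such that for every irreducible representation π the fiber S_π is defined. Define S̃ by D(S̃) = {a ∈ A : π(a) ∈ D(cl(S_π)) for all π, and there exists b ∈ A with π(b) = cl(S_π)(π(a)) for all π}, S̃a = b. Then S̃ is a closed operator extending S. -/
/-!
If `(a, b)` and `(a, b')` both lie in the graph of `S̃`, then for every `π` the pair
`(0, π (b - b'))` lies in the closure of the graph of `S_π`, which is a closed subspace; closability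
of `S_π` forces `π (b - b') = 0`, and `b = b'` because the representations separate points.
The graph of `S̃` is closed as an intersection of preimages of closed sets under the maps
`(a, b) ↦ (π a, π b)`, which are continuous since star homomorphisms of C⋆-algebras are
contractive.
-/

open scoped CStarAlgebra

section

variable {A : Type*} [NonUnitalCStarAlgebra A]
variable {ι : Type*} {H : ι → Type*}
variable [∀ i, NormedAddCommGroup (H i)] [∀ i, InnerProductSpace ℂ (H i)]
variable [∀ i, CompleteSpace (H i)]

/-- The closure of the graph of the fiber operator `S_π` of an operator `S` with domain `D`,
in `π(A) × π(A) ⊆ B(H_π) × B(H_π)`; membership `(π a, π b) ∈ fiberGraphClosure` expresses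
`π a ∈ D(cl(S_π))` with `cl(S_π)(π a) = π b`. -/
def fiberGraphClosure (D : Submodule ℂ A) (S : D →ₗ[ℂ] A)
    (π : ∀ i, A →⋆ₙₐ[ℂ] (H i →L[ℂ] H i)) (i : ι) :
    Set ((H i →L[ℂ] H i) × (H i →L[ℂ] H i)) :=
  closure {q | ∃ a : D, q = (π i (a : A), π i (S a))}

/-- The graph of the operator `S̃`:  `(a, b) ∈ tildeGraph` iff for every `i`,
`π i a ∈ D(cl(S_{π i}))` and `cl(S_{π i})(π i a) = π i b`. -/
def tildeGraph (D : Submodule ℂ A) (S : D →ₗ[ℂ] A)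
    (π : ∀ i, A →⋆ₙₐ[ℂ] (H i →L[ℂ] H i)) : Set (A × A) :=
  {p | ∀ i, (π i p.1, π i p.2) ∈ fiberGraphClosure D S π i}

section

variable (D : Submodule ℂ A) (S : D →ₗ[ℂ] A) (π : ∀ i, A →⋆ₙₐ[ℂ] (H i →L[ℂ] H i))

noncomputable def fiberGraph (i : ι) : Submodule ℂ ((H i →L[ℂ] H i) × (H i →L[ℂ] H i)) :=
  LinearMap.range (((π i : A →ₗ[ℂ] (H i →L[ℂ] H i)) ∘ₗ D.subtype).prod
    ((π i : A →ₗ[ℂ] (H i →L[ℂ] H i)) ∘ₗ S))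

theorem fiberGraphClosure_eq_topologicalClosure (i : ι) :
    fiberGraphClosure D S π i = (fiberGraph D S π i).topologicalClosure := by
  rw [Submodule.topologicalClosure_coe, fiberGraphClosure, fiberGraph, LinearMap.coe_range]
  congr 1
  ext q
  exact ⟨fun ⟨a, ha⟩ => ⟨a, ha.symm⟩, fun ⟨a, ha⟩ => ⟨a, ha.symm⟩⟩

theorem sub_mem_fiberGraphClosure {i : ι} {p q : (H i →L[ℂ] H i) × (H i →L[ℂ] H i)}
    (hp : p ∈ fiberGraphClosure D S π i) (hq : q ∈ fiberGraphClosure D S π i) :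
    p - q ∈ fiberGraphClosure D S π i := by
  rw [fiberGraphClosure_eq_topologicalClosure] at hp hq ⊢
  exact sub_mem hp hq

theorem eq_of_mem_tildeGraph (hsep : ∀ a : A, (∀ i, π i a = 0) → a = 0)
    (hfib : ∀ i, ∀ y : H i →L[ℂ] H i, (0, y) ∈ fiberGraphClosure D S π i → y = 0)
    {a b b' : A} (hb : (a, b) ∈ tildeGraph D S π) (hb' : (a, b') ∈ tildeGraph D S π) :
    b = b' := by
  refine sub_eq_zero.mp (hsep _ fun i => hfib i _ ?_)
  simpa only [Prod.mk_sub_mk, sub_self, map_sub] using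
    sub_mem_fiberGraphClosure D S π (hb i) (hb' i)

theorem isClosed_tildeGraph : IsClosed (tildeGraph D S π) := by
  have hgraph : tildeGraph D S π =
      ⋂ i, (Prod.map (π i) (π i)) ⁻¹' fiberGraphClosure D S π i := by
    ext p
    rw [Set.mem_iInter]
    rfl
  rw [hgraph]
  exact isClosed_iInter fun i =>
    isClosed_closure.preimage ((map_continuous (π i)).prodMap (map_continuous (π i)))

theorem mk_mem_tildeGraph (a : D) : ((a : A), S a) ∈ tildeGraph D S π :=
  fun _ => subset_closure ⟨a, rfl⟩

end

theorem stmt_15_general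
    (π : ∀ i, A →⋆ₙₐ[ℂ] (H i →L[ℂ] H i))
    (hsep : ∀ a : A, (∀ i, π i a = 0) → a = 0)
    (D : Submodule ℂ A)
    (S : D →ₗ[ℂ] A)
    (hfib : ∀ i, ∀ y : H i →L[ℂ] H i, (0, y) ∈ fiberGraphClosure D S π i → y = 0) :
    (∀ a b b' : A, (a, b) ∈ tildeGraph D S π → (a, b') ∈ tildeGraph D S π → b = b') ∧
    IsClosed (tildeGraph D S π) ∧
    (∀ a : D, ((a : A), S a) ∈ tildeGraph D S π) :=
  ⟨fun _ _ _ => eq_of_mem_tildeGraph D S π hsep hfib, isClosed_tildeGraph D S π,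
    mk_mem_tildeGraph D S π⟩

/-- Let `S` be a closed densely defined `A`-linear operator on a C*-algebra `A`
whose domain is a right ideal, and let `(π i)` be the irreducible representations of `A`
(a separating family).  Assume each fiber `S_{π i}` is closable.  Then the prescription
`D(S̃) = {a : π a ∈ D(cl(S_π)) ∀π, ∃ b, π b = cl(S_π)(π a) ∀π}`, `S̃ a = b`, defines a
(single-valued) closed operator extending `S`. -/
theorem stmt_15
    (π : ∀ i, A →⋆ₙₐ[ℂ] (H i →L[ℂ] H i))
    (hirr : ∀ i, ∀ ξ : H i, ξ ≠ 0 → Dense (Set.range fun a : A => π i a ξ))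
    (hsep : ∀ a : A, (∀ i, π i a = 0) → a = 0)
    (D : Submodule ℂ A) (hD : Dense (D : Set A))
    (hIdeal : ∀ a ∈ D, ∀ x : A, a * x ∈ D)
    (S : D →ₗ[ℂ] A)
    (hSmod : ∀ (a : D) (x : A), S ⟨(a : A) * x, hIdeal a a.2 x⟩ = S a * x)
    (hclosed : IsClosed {p : A × A | ∃ a : D, p = ((a : A), S a)})
    (hfib : ∀ i, ∀ y : H i →L[ℂ] H i, (0, y) ∈ fiberGraphClosure D S π i → y = 0) :
    (∀ a b b' : A, (a, b) ∈ tildeGraph D S π → (a, b') ∈ tildeGraph D S π → b = b') ∧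
    IsClosed (tildeGraph D S π) ∧
    (∀ a : D, ((a : A), S a) ∈ tildeGraph D S π) :=
  stmt_15_general π hsep D S hfib

end
end
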